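/- arXiv:1501.03363 — 5 statements merged into one kernel-verified Lean document; each statement's English description precedes it below -/
import Mathlib

section
/- Let p, q > 0 be real numbers and set ξ = p + q. Assume the rational-parameter setup, where now all β-multiplicities and γ-multiplicities equal 1 (M_m = 1 for all m and N_n = 1 for all n), and assume M⁺ + N⁻ ≥ ∑_{k=1}^{m⁺} m_k + ∑_{k=1}^{n⁻} n_k. Then for every x ∈ ℂ ∖ ({0} ∪ {β₁,…,β_{M⁺}} ∪ {−γ₁,…,−γ_{N⁻}}), the rational function f of formula (3.4) satisfies f(x) = (p/ξ)/x − ∑_{m=1}^{M⁺} Ĥ_m/(x−β_m) + ∑_{n=1}^{N⁻} Ĝ_n/(x+γ_n), where Ĥ_m = −(p/ξ)·[∏_{m'=1}^{M⁺}(−β_{m'})·∏_{n=1}^{N⁻}γ_n / (∏_{k=1}^{m⁺}(−η_k)^{m_k}·∏_{k=1}^{n⁻}ϑ_k^{n_k})]·[∏_{k=1}^{m⁺}(β_m−η_k)^{m_k}·∏_{k=1}^{n⁻}(β_m+ϑ_k)^{n_k} / (β_m·∏_{k≠m}(β_m−β_k)·∏_{k=1}^{N⁻}(β_m+γ_k))]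 and Ĝ_n = −(p/ξ)·[∏_{m=1}^{M⁺}β_m·∏_{n'=1}^{N⁻}γ_{n'} / (∏_{k=1}^{m⁺}η_k^{m_k}·∏_{k=1}^{n⁻}ϑ_k^{n_k})]·[∏_{k=1}^{m⁺}(γ_n+η_k)^{m_k}·∏_{k=1}^{n⁻}(ϑ_k−γ_n)^{n_k} / (γ_n·∏_{m=1}^{M⁺}(γ_n+β_m)·∏_{k≠n}(γ_k−γ_n))]. -/
/-!
With simple poles, `x * ∏ (x - β k) * ∏ (x + γ k)` is the nodal polynomial of the nodes `0`,
`β k`, `-γ k`, and the degree hypothesis says that the numerator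
`∏ (x - η k) ^ m k * ∏ (x + ϑ k) ^ n k` has degree smaller than the number of nodes. The first
barycentric form of Lagrange interpolation is then exactly the partial-fraction expansion: the
coefficient at a node `v` is the numerator at `v` divided by `∏ w ≠ v, (v - w)`. Positive real
parts keep the nodes distinct and the normalising constants nonzero. At the nodes `-γ k` the signs
`(-1) ^ ∑ m k` and `(-1) ^ M⁺` each occur twice and cancel.
-/

open Finset Complex Polynomial

theorem Finset.prod_univ_erase_eq_prod_ite {ι M : Type*} [Fintype ι] [DecidableEq ι]
    [CommMonoid M] (i : ι) (g : ι → M) :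
    ∏ j ∈ univ.erase i, g j = ∏ j, if j = i then 1 else g j := by
  rw [← prod_erase univ (f := fun j => if j = i then 1 else g j) (if_pos rfl)]
  exact prod_congr rfl fun j hj => (if_neg (ne_of_mem_erase hj)).symm

theorem Finset.prod_neg_pow {ι R : Type*} [CommRing R] (s : Finset ι) (a : ι → R) (e : ι → ℕ) :
    ∏ k ∈ s, (-a k) ^ e k = (-1) ^ (∑ k ∈ s, e k) * ∏ k ∈ s, a k ^ e k := by
  rw [← prod_pow_eq_pow_sum, ← prod_mul_distrib]
  exact prod_congr rfl fun k _ => _root_.neg_pow _ _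

theorem Finset.prod_neg_pow_div_prod_neg_pow {ι F : Type*} [Field F] (s : Finset ι)
    (a b : ι → F) (e : ι → ℕ) :
    (∏ k ∈ s, (-a k) ^ e k) / ∏ k ∈ s, (-b k) ^ e k
      = (∏ k ∈ s, a k ^ e k) / ∏ k ∈ s, b k ^ e k := by
  rw [prod_neg_pow, prod_neg_pow]
  exact mul_div_mul_left _ _ (pow_ne_zero _ (neg_ne_zero.2 one_ne_zero))

theorem Finset.prod_neg_div_prod_neg {ι F : Type*} [Field F] (s : Finset ι) (a b : ι → F) :
    (∏ k ∈ s, -a k) / ∏ k ∈ s, -b k = (∏ k ∈ s, a k) / ∏ k ∈ s, b k := by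
  simpa using prod_neg_pow_div_prod_neg_pow s a b 1

theorem Lagrange.eval_div_eval_nodal {F ι : Type*} [Field F] [DecidableEq ι] {s : Finset ι}
    {v : ι → F} {P : F[X]} {x : F} (hvs : Set.InjOn v s) (hP : P.degree < #s)
    (hx : ∀ i ∈ s, x ≠ v i) :
    P.eval x / (nodal s v).eval x = ∑ i ∈ s, P.eval (v i) * nodalWeight s v i / (x - v i) := by
  conv_lhs => rw [eq_interpolate hvs hP, eval_interpolate_not_at_node _ hx,
    mul_div_cancel_left₀ _ (eval_nodal_not_at_node hx)]
  exact sum_congr rfl fun i _ => by ring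

section SimplePoles

variable {F ι κ : Type*} [Field F] (β : ι → F) (γ : κ → F)

def poleNode : Option (ι ⊕ κ) → F
  | none => 0
  | some (Sum.inl k) => β k
  | some (Sum.inr k) => -γ k

variable {β γ} in
theorem poleNode_injective (hβ : Function.Injective β) (hγ : Function.Injective γ)
    (hβ0 : ∀ k, β k ≠ 0) (hγ0 : ∀ k, γ k ≠ 0) (hβγ : ∀ k j, β k + γ j ≠ 0) :
    Function.Injective (poleNode β γ) := by
  rintro (_ | (a | a)) (_ | (b | b)) h <;> simp only [poleNode] at h
  · rfl
  · exact absurd h.symm (hβ0 b)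
  · exact absurd h.symm (neg_ne_zero.2 (hγ0 b))
  · exact absurd h (hβ0 a)
  · rw [hβ h]
  · exact absurd (eq_neg_iff_add_eq_zero.1 h) (hβγ a b)
  · exact absurd h (neg_ne_zero.2 (hγ0 a))
  · exact absurd (eq_neg_iff_add_eq_zero.1 h.symm) (hβγ b a)
  · rw [hγ (neg_injective h)]

variable [Fintype ι] [Fintype κ]

theorem eval_nodal_poleNode (x : F) :
    (Lagrange.nodal univ (poleNode β γ)).eval x = x * (∏ k, (x - β k)) * ∏ k, (x + γ k) := by
  simp [Lagrange.eval_nodal, Fintype.prod_option, Fintype.prod_sum_type, poleNode, mul_assoc]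

variable [DecidableEq ι] [DecidableEq κ]

theorem nodalWeight_poleNode_none :
    Lagrange.nodalWeight univ (poleNode β γ) none = ((∏ k, -β k) * ∏ k, γ k)⁻¹ := by
  rw [Lagrange.nodalWeight, prod_inv_distrib, prod_univ_erase_eq_prod_ite, Fintype.prod_option,
    Fintype.prod_sum_type]
  simp [poleNode]

theorem nodalWeight_poleNode_inl (k : ι) :
    Lagrange.nodalWeight univ (poleNode β γ) (some (.inl k))
      = (β k * (∏ j ∈ univ.erase k, (β k - β j)) * ∏ j, (β k + γ j))⁻¹ := by
  rw [Lagrange.nodalWeight, prod_inv_distrib, prod_univ_erase_eq_prod_ite, Fintype.prod_option,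
    Fintype.prod_sum_type, prod_univ_erase_eq_prod_ite]
  simp [poleNode, mul_assoc]

theorem nodalWeight_poleNode_inr (k : κ) :
    Lagrange.nodalWeight univ (poleNode β γ) (some (.inr k))
      = (-γ k * (∏ j, (-γ k - β j)) * ∏ j ∈ univ.erase k, (γ j - γ k))⁻¹ := by
  rw [Lagrange.nodalWeight, prod_inv_distrib, prod_univ_erase_eq_prod_ite, Fintype.prod_option,
    Fintype.prod_sum_type, prod_univ_erase_eq_prod_ite]
  simp [poleNode, mul_assoc, neg_add_eq_sub]

variable {β γ} in
theorem eval_div_eq_sum_simple_poles (hβ : Function.Injective β) (hγ : Function.Injective γ)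
    (hβ0 : ∀ k, β k ≠ 0) (hγ0 : ∀ k, γ k ≠ 0) (hβγ : ∀ k j, β k + γ j ≠ 0) {P : F[X]}
    (hP : P.natDegree ≤ Fintype.card ι + Fintype.card κ) {x : F} (hx0 : x ≠ 0)
    (hxβ : ∀ k, x ≠ β k) (hxγ : ∀ k, x ≠ -γ k) :
    P.eval x / (x * (∏ k, (x - β k)) * ∏ k, (x + γ k))
      = P.eval 0 / ((∏ k, -β k) * ∏ k, γ k) / x
        + ∑ k, P.eval (β k) / (β k * (∏ j ∈ univ.erase k, (β k - β j)) * ∏ j, (β k + γ j))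
            / (x - β k)
        + ∑ k, P.eval (-γ k) / (-γ k * (∏ j, (-γ k - β j)) * ∏ j ∈ univ.erase k, (γ j - γ k))
            / (x + γ k) := by
  have hdeg : P.degree < #(univ : Finset (Option (ι ⊕ κ))) := by
    refine degree_le_natDegree.trans_lt ?_
    rw [card_univ, Fintype.card_option, Fintype.card_sum]
    exact_mod_cast Nat.lt_succ_of_le hP
  have hx : ∀ i ∈ univ, x ≠ poleNode β γ i := by
    rintro (_ | k | k) - <;> simp [poleNode, *]
  rw [← eval_nodal_poleNode, Lagrange.eval_div_eval_nodal
    (poleNode_injective hβ hγ hβ0 hγ0 hβγ).injOn hdeg hx, Fintype.sum_option,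
    Fintype.sum_sum_type, nodalWeight_poleNode_none]
  simp only [nodalWeight_poleNode_inl, nodalWeight_poleNode_inr, poleNode, sub_zero,
    sub_neg_eq_add, ← div_eq_mul_inv, ← add_assoc]

end SimplePoles

section Numerator

variable {R μ ν : Type*} [CommRing R] [Fintype μ] [Fintype ν]
  (η : μ → R) (m : μ → ℕ) (ϑ : ν → R) (n : ν → ℕ)

noncomputable def numeratorPoly : R[X] :=
  (∏ k, (X - C (η k)) ^ m k) * ∏ k, (X + C (ϑ k)) ^ n k

theorem eval_numeratorPoly (y : R) :
    (numeratorPoly η m ϑ n).eval y = (∏ k, (y - η k) ^ m k) * ∏ k, (y + ϑ k) ^ n k := by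
  simp [numeratorPoly, eval_prod]

theorem natDegree_numeratorPoly_le :
    (numeratorPoly η m ϑ n).natDegree ≤ ∑ k, m k + ∑ k, n k := by
  refine natDegree_mul_le.trans (add_le_add ((natDegree_prod_le _ _).trans ?_)
    ((natDegree_prod_le _ _).trans ?_)) <;>
  refine sum_le_sum fun k _ => (natDegree_pow_le_of_le _ ?_).trans (mul_one _).le
  exacts [natDegree_X_sub_C_le _, natDegree_add_C.trans_le natDegree_X_le]

end Numerator

theorem coeff_neg_pole_eq {F ι κ μ ν : Type*} [Field F] [Fintype ι] [Fintype κ] [Fintype μ]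
    [Fintype ν] [DecidableEq κ] (β : ι → F) (γ : κ → F) (η : μ → F) (m : μ → ℕ) (ϑ : ν → F)
    (n : ν → ℕ) (c : F) (k : κ) :
    c * ((∏ j, -β j) * (∏ j, γ j) / ((∏ j, (-η j) ^ m j) * ∏ j, ϑ j ^ n j)) *
      ((∏ j, (-γ k - η j) ^ m j) * (∏ j, (-γ k + ϑ j) ^ n j)
        / (-γ k * (∏ j, (-γ k - β j)) * ∏ j ∈ univ.erase k, (γ j - γ k)))
    = -(c * ((∏ j, β j) * (∏ j, γ j) / ((∏ j, η j ^ m j) * ∏ j, ϑ j ^ n j)) *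
      ((∏ j, (γ k + η j) ^ m j) * (∏ j, (ϑ j - γ k) ^ n j)
        / (γ k * (∏ j, (γ k + β j)) * ∏ j ∈ univ.erase k, (γ j - γ k)))) := by
  have hϑ (j : ν) : -γ k + ϑ j = ϑ j - γ k := neg_add_eq_sub _ _
  have hη (j : μ) : -γ k - η j = -(γ k + η j) := (neg_add' _ _).symm
  have hβ (j : ι) : -γ k - β j = -(γ k + β j) := (neg_add' _ _).symm
  simp only [hϑ, hη, hβ]
  calc _ = -(c * ((∏ j, (-(γ k + η j)) ^ m j) / ∏ j, (-η j) ^ m j)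
          * ((∏ j, -β j) / ∏ j, -(γ k + β j))
          * ((∏ j, γ j) * (∏ j, (ϑ j - γ k) ^ n j)
            / ((∏ j, ϑ j ^ n j) * γ k * ∏ j ∈ univ.erase k, (γ j - γ k)))) := by ring
    _ = _ := by rw [prod_neg_pow_div_prod_neg_pow, prod_neg_div_prod_neg]; ring

theorem paper_sec_4_1_general (p q : ℝ)
    (Mp Nm mp nm : ℕ)
    (β : Fin Mp → ℂ) (M : Fin Mp → ℕ)
    (γ : Fin Nm → ℂ) (N : Fin Nm → ℕ)
    (η : Fin mp → ℂ) (m : Fin mp → ℕ)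
    (ϑ : Fin nm → ℂ) (n : Fin nm → ℕ)
    (hβinj : Function.Injective β) (hβre : ∀ k, 0 < (β k).re) (hM : ∀ k, M k = 1)
    (hγinj : Function.Injective γ) (hγre : ∀ k, 0 < (γ k).re) (hN : ∀ k, N k = 1)
    (hηre : ∀ k, 0 < (η k).re)
    (hϑre : ∀ k, 0 < (ϑ k).re)
    (hdeg : ∑ k, m k + ∑ k, n k ≤ Mp + Nm)
    (f : ℂ → ℂ)
    (hf : ∀ x : ℂ, f x =
      ((p : ℂ) / ((p : ℂ) + (q : ℂ))) *
        ((∏ mm, (-β mm) ^ M mm) * (∏ nn, γ nn ^ N nn) *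
          (∏ k, (x - η k) ^ m k) * ∏ k, (x + ϑ k) ^ n k) /
        ((∏ k, (-η k) ^ m k) * (∏ k, ϑ k ^ n k) * x *
          (∏ mm, (x - β mm) ^ M mm) * ∏ nn, (x + γ nn) ^ N nn)) :
    ∀ x : ℂ, x ≠ 0 → (∀ mm, x ≠ β mm) → (∀ nn, x ≠ -γ nn) →
      f x = ((p : ℂ) / ((p : ℂ) + (q : ℂ))) / x
        - (∑ mm, (-(((p : ℂ) / ((p : ℂ) + (q : ℂ))) *
            ((∏ mm', -β mm') * (∏ nn, γ nn) /
              ((∏ k, (-η k) ^ m k) * ∏ k, ϑ k ^ n k)) *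
            ((∏ k, (β mm - η k) ^ m k) * (∏ k, (β mm + ϑ k) ^ n k) /
              (β mm * (∏ k ∈ Finset.univ.erase mm, (β mm - β k)) *
                ∏ k, (β mm + γ k))))) / (x - β mm))
        + ∑ nn, (-(((p : ℂ) / ((p : ℂ) + (q : ℂ))) *
            ((∏ mm, β mm) * (∏ nn', γ nn') /
              ((∏ k, η k ^ m k) * ∏ k, ϑ k ^ n k)) *
            ((∏ k, (γ nn + η k) ^ m k) * (∏ k, (ϑ k - γ nn) ^ n k) /
              (γ nn * (∏ mm, (γ nn + β mm)) *
                ∏ k ∈ Finset.univ.erase nn, (γ k - γ nn))))) / (x + γ nn) := by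
  intro x hx0 hxβ hxγ
  have hβ0 k : β k ≠ 0 := ne_zero_of_re_pos (hβre k)
  have hγ0 k : γ k ≠ 0 := ne_zero_of_re_pos (hγre k)
  have hβγ k j : β k + γ j ≠ 0 := ne_zero_of_re_pos (by simpa using add_pos (hβre k) (hγre j))
  have hfx : f x = ((p : ℂ) / (p + q)) * ((∏ k, -β k) * (∏ k, γ k) /
      ((∏ k, (-η k) ^ m k) * ∏ k, ϑ k ^ n k)) *
      ((numeratorPoly η m ϑ n).eval x / (x * (∏ k, (x - β k)) * ∏ k, (x + γ k))) := by
    rw [hf x, eval_numeratorPoly]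
    simp only [hM, hN, pow_one]
    ring
  rw [hfx, eval_div_eq_sum_simple_poles hβinj hγinj hβ0 hγ0 hβγ
      ((natDegree_numeratorPoly_le η m ϑ n).trans (by simpa using hdeg)) hx0 hxβ hxγ,
    mul_add, mul_add, mul_sum, mul_sum, sub_eq_add_neg, ← sum_neg_distrib]
  congr 1
  congr 1
  · have hA : (∏ k, -β k) * ∏ k, γ k ≠ 0 := by simp [prod_eq_zero_iff, hβ0, hγ0]
    have hB : (∏ k, (-η k) ^ m k) * ∏ k, ϑ k ^ n k ≠ 0 := by
      simp [prod_eq_zero_iff, ne_zero_of_re_pos, hηre, hϑre]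
    simp only [eval_numeratorPoly, zero_sub, zero_add]
    rw [mul_assoc, div_div, div_mul_div_cancel₀ hB, div_mul_cancel_left₀ hA,
      ← div_eq_mul_inv]
  · exact sum_congr rfl fun k _ => by rw [eval_numeratorPoly, mul_div_assoc', neg_div, neg_neg]
  · exact sum_congr rfl fun k _ => by rw [eval_numeratorPoly, mul_div_assoc', coeff_neg_pole_eq]

/-- The particular case of Section 4.1 (formulas (4.1)–(4.3)): when all the roots `β` and
`γ` are simple (all multiplicities `M_m = N_n = 1`) and `M⁺ + N⁻ ≥ ∑ m_k + ∑ n_k`, the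
rational function `f` of formula (3.4) admits the explicit simple-pole partial-fraction
decomposition with coefficients `Ĥ_m` and `Ĝ_n`. -/
theorem paper_sec_4_1 (p q : ℝ) (hp : 0 < p) (hq : 0 < q)
    (Mp Nm mp nm : ℕ)
    (β : Fin Mp → ℂ) (M : Fin Mp → ℕ)
    (γ : Fin Nm → ℂ) (N : Fin Nm → ℕ)
    (η : Fin mp → ℂ) (m : Fin mp → ℕ)
    (ϑ : Fin nm → ℂ) (n : Fin nm → ℕ)
    (hβinj : Function.Injective β) (hβre : ∀ k, 0 < (β k).re) (hM : ∀ k, M k = 1)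
    (hγinj : Function.Injective γ) (hγre : ∀ k, 0 < (γ k).re) (hN : ∀ k, N k = 1)
    (hηinj : Function.Injective η) (hηre : ∀ k, 0 < (η k).re) (hm : ∀ k, 1 ≤ m k)
    (hϑinj : Function.Injective ϑ) (hϑre : ∀ k, 0 < (ϑ k).re) (hn : ∀ k, 1 ≤ n k)
    (hηβ : ∀ k j, η k ≠ β j) (hϑγ : ∀ k j, ϑ k ≠ γ j)
    (hdeg : ∑ k, m k + ∑ k, n k ≤ Mp + Nm)
    (f : ℂ → ℂ)
    (hf : ∀ x : ℂ, f x =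
      ((p : ℂ) / ((p : ℂ) + (q : ℂ))) *
        ((∏ mm, (-β mm) ^ M mm) * (∏ nn, γ nn ^ N nn) *
          (∏ k, (x - η k) ^ m k) * ∏ k, (x + ϑ k) ^ n k) /
        ((∏ k, (-η k) ^ m k) * (∏ k, ϑ k ^ n k) * x *
          (∏ mm, (x - β mm) ^ M mm) * ∏ nn, (x + γ nn) ^ N nn)) :
    ∀ x : ℂ, x ≠ 0 → (∀ mm, x ≠ β mm) → (∀ nn, x ≠ -γ nn) →
      f x = ((p : ℂ) / ((p : ℂ) + (q : ℂ))) / x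
        - (∑ mm, (-(((p : ℂ) / ((p : ℂ) + (q : ℂ))) *
            ((∏ mm', -β mm') * (∏ nn, γ nn) /
              ((∏ k, (-η k) ^ m k) * ∏ k, ϑ k ^ n k)) *
            ((∏ k, (β mm - η k) ^ m k) * (∏ k, (β mm + ϑ k) ^ n k) /
              (β mm * (∏ k ∈ Finset.univ.erase mm, (β mm - β k)) *
                ∏ k, (β mm + γ k))))) / (x - β mm))
        + ∑ nn, (-(((p : ℂ) / ((p : ℂ) + (q : ℂ))) *
            ((∏ mm, β mm) * (∏ nn', γ nn') /
              ((∏ k, η k ^ m k) * ∏ k, ϑ k ^ n k)) *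
            ((∏ k, (γ nn + η k) ^ m k) * (∏ k, (ϑ k - γ nn) ^ n k) /
              (γ nn * (∏ mm, (γ nn + β mm)) *
                ∏ k ∈ Finset.univ.erase nn, (γ k - γ nn))))) / (x + γ nn) :=
  paper_sec_4_1_general p q Mp Nm mp nm β M γ N η m ϑ n hβinj hβre hM hγinj hγre hN hηre hϑre hdeg f
    hf
end

section
/- Let β₁,…,β_K be pairwise distinct complex numbers with positive real parts, with multiplicities M₁,…,M_K ≥ 1, and let C₀ ∈ ℂ and C_{kj} ∈ ℂ (1 ≤ k ≤ K, 1 ≤ j ≤ M_k). Define ψ⁺(s) = C₀ + ∑_{k=1}^{K} ∑_{j=1}^{M_k} C_{kj}/(s+β_k)^j for s ∈ ℂ with Re(s) ≥ 0. Let θ, s ∈ ℂ with Re(θ) > 0, Re(s) ≥ 0, s ≠ θ, and ψ⁺(s) ≠ 0. Then the function x ↦ e^{−θx}·(1/ψ⁺(s))·∑_{k=1}^{K} ∑_{j=1}^{M_k} C_{kj}·((−1)^{j−1}/(j−1)!)·iteratedDeriv (j−1) (b ↦ e^{−bx}/(s+b)) (β_k) is integrable on (0,∞) and ∫_0^∞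 e^{−θx}·(1/ψ⁺(s))·∑_{k=1}^{K} ∑_{j=1}^{M_k} C_{kj}·((−1)^{j−1}/(j−1)!)·iteratedDeriv (j−1) (b ↦ e^{−bx}/(s+b)) (β_k) dx = (1/(s−θ))·(ψ⁺(θ)/ψ⁺(s) − 1). -/
/-!
By the Leibniz rule, `(-1)ⁿ/n! · ∂ⁿ/∂bⁿ (e^{-bx}/(s+b))` at `b = β` equals
`∑_{i ≤ n} xⁱ/i! · e^{-βx}/(s+β)^{n-i+1}`, so after multiplying by `e^{-θx}` each term is a
Laplace integral `∫₀^∞ xⁱ e^{-(θ+β)x} dx = i!/(θ+β)^{i+1}`. The resulting sum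
`∑ᵢ (θ+β)^{-(i+1)} (s+β)^{-(n-i+1)}` is a two-variable geometric sum, equal to
`((θ+β)^{-(n+1)} - (s+β)^{-(n+1)})/(s-θ)`; summed against the `C_{kj}` this is
`(ψ⁺(θ) - ψ⁺(s))/(s-θ)`.
-/

open MeasureTheory Complex Finset Filter Set Topology Nat

lemma tendsto_pow_mul_cexp_neg_mul_atTop_nhds_zero {a : ℂ} (ha : 0 < a.re) (m : ℕ) :
    Tendsto (fun x : ℝ => (x : ℂ) ^ m * cexp (-a * x)) atTop (𝓝 0) := by
  rw [tendsto_zero_iff_norm_tendsto_zero]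
  refine (tendsto_rpow_mul_exp_neg_mul_atTop_nhds_zero m a.re ha).congr' ?_
  filter_upwards [eventually_ge_atTop 0] with x hx
  simp [Complex.norm_exp, abs_of_nonneg hx]

lemma integrableOn_pow_mul_cexp_neg_mul_Ioi {a : ℂ} (ha : 0 < a.re) (m : ℕ) :
    IntegrableOn (fun x : ℝ => (x : ℂ) ^ m * cexp (-a * x)) (Ioi 0) := by
  refine Integrable.mono' (integrableOn_rpow_mul_exp_neg_mul_rpow (s := m) (p := 1)
    (neg_one_lt_zero.trans_le m.cast_nonneg) one_pos ha) (by fun_prop) ?_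
  filter_upwards [ae_restrict_mem measurableSet_Ioi] with x (hx : 0 < x)
  simp [Complex.norm_exp, abs_of_pos hx]

lemma integral_pow_mul_cexp_neg_mul_Ioi {a : ℂ} (ha : 0 < a.re) (m : ℕ) :
    ∫ x : ℝ in Ioi 0, (x : ℂ) ^ m * cexp (-a * x) = m ! / a ^ (m + 1) := by
  have ha0 : a ≠ 0 := ne_zero_of_re_pos ha
  induction m with
  | zero =>
    simpa [div_neg, neg_div] using integral_exp_mul_complex_Ioi (a := -a) (by simpa) 0
  | succ m ih =>
    have h_zero : Tendsto (fun x : ℝ => (x : ℂ) ^ (m + 1) * (-cexp (-a * x) / a))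
        (𝓝[>] 0) (𝓝 0) := by
      have hcont : Continuous fun x : ℝ => (x : ℂ) ^ (m + 1) * (-cexp (-a * x) / a) := by
        fun_prop
      simpa using hcont.continuousWithinAt.tendsto (x := 0) (s := Ioi 0)
    have h_infty : Tendsto (fun x : ℝ => (x : ℂ) ^ (m + 1) * (-cexp (-a * x) / a))
        atTop (𝓝 0) := by
      simpa [mul_div_assoc', neg_div] using
        ((tendsto_pow_mul_cexp_neg_mul_atTop_nhds_zero ha (m + 1)).div_const a).neg
    have hparts := integral_Ioi_mul_deriv_eq_deriv_mul (a := 0) (a' := 0) (b' := 0)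
      (u := fun x : ℝ => (x : ℂ) ^ (m + 1)) (u' := fun x : ℝ => (m + 1) * (x : ℂ) ^ m)
      (v := fun x : ℝ => -cexp (-a * x) / a) (v' := fun x : ℝ => cexp (-a * x))
      (fun x _ => by simpa using (hasDerivAt_pow (m + 1) (x : ℂ)).comp_ofReal)
      (fun x _ => by
        have := (((hasDerivAt_id (x : ℂ)).const_mul (-a)).cexp.neg.div_const a).comp_ofReal
        simpa [ha0] using this)
      (integrableOn_pow_mul_cexp_neg_mul_Ioi ha (m + 1))
      (IntegrableOn.congr_fun
        ((integrableOn_pow_mul_cexp_neg_mul_Ioi ha m).const_mul (-(m + 1) / a))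
        (fun x _ => by simp only [Pi.mul_apply]; ring) measurableSet_Ioi)
      h_zero h_infty
    calc ∫ x : ℝ in Ioi 0, (x : ℂ) ^ (m + 1) * cexp (-a * x)
        = ∫ x : ℝ in Ioi 0, (m + 1) / a * ((x : ℂ) ^ m * cexp (-a * x)) := by
          rw [hparts, sub_self, zero_sub, ← integral_neg]
          congr 1 with x
          ring
      _ = (m + 1)! / a ^ (m + 1 + 1) := by
          rw [integral_const_mul, ih, factorial_succ]
          push_cast
          field_simp
          ring

lemma iteratedDeriv_inv_const_add (s b : ℂ) (n : ℕ) :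
    iteratedDeriv n (fun z : ℂ => (s + z)⁻¹) b = (-1) ^ n * n ! * ((s + b) ^ (n + 1))⁻¹ := by
  rw [iteratedDeriv_comp_const_add n Inv.inv s, iteratedDeriv_eq_iterate]
  dsimp only
  rw [iter_deriv_inv,
    show (-1 - n : ℤ) = -((n + 1 : ℕ) : ℤ) by push_cast; ring, zpow_neg, zpow_natCast]

lemma iteratedDeriv_cexp_neg_mul_div_const_add {s b : ℂ} (hb : s + b ≠ 0) (x : ℂ) (n : ℕ) :
    iteratedDeriv n (fun z => cexp (-z * x) / (s + z)) b = ∑ i ∈ range (n + 1),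
      n.choose i * ((-x) ^ i * cexp (-b * x)) *
        ((-1) ^ (n - i) * (n - i)! * ((s + b) ^ (n - i + 1))⁻¹) := by
  have hf : (fun z => cexp (-z * x) / (s + z)) = fun z => cexp (-x * z) * (s + z)⁻¹ := by
    ext z; rw [div_eq_mul_inv, neg_mul_comm, mul_comm z]
  rw [hf, iteratedDeriv_fun_mul (by fun_prop) (by fun_prop (disch := exact hb))]
  simp only [iteratedDeriv_cexp_const_mul, iteratedDeriv_inv_const_add, mul_comm (-x) b,
    ← neg_mul_comm]

lemma neg_one_pow_div_factorial_mul_iteratedDeriv {s b : ℂ} (hb : s + b ≠ 0) (x : ℂ) (n : ℕ) :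
    (-1) ^ n / n ! * iteratedDeriv n (fun z => cexp (-z * x) / (s + z)) b =
      ∑ i ∈ range (n + 1), x ^ i / i ! * cexp (-b * x) / (s + b) ^ (n - i + 1) := by
  rw [iteratedDeriv_cexp_neg_mul_div_const_add hb, mul_sum]
  refine sum_congr rfl fun i hi => ?_
  have hin : i ≤ n := Nat.lt_succ_iff.mp (mem_range.mp hi)
  have hchoose : (n.choose i : ℂ) * i ! * (n - i)! = n ! := by
    exact_mod_cast Nat.choose_mul_factorial_mul_factorial hin
  have hsign : (-1 : ℂ) ^ n * (-1) ^ i * (-1) ^ (n - i) = 1 := by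
    rw [mul_assoc, ← pow_add, Nat.add_sub_cancel' hin, ← pow_add, ← two_mul, pow_mul]
    norm_num
  rw [neg_pow x i]
  field_simp
  rw [div_eq_div_iff (by exact_mod_cast n.factorial_ne_zero)
    (by exact_mod_cast i.factorial_ne_zero)]
  linear_combination (x ^ i * n.choose i * (n - i)! * i !) * hsign + x ^ i * hchoose

lemma sum_inv_pow_mul_inv_pow {K : Type*} [Field K] {a b : K} (ha : a ≠ 0) (hb : b ≠ 0)
    (hab : a ≠ b) (n : ℕ) :
    ∑ i ∈ range (n + 1), (a ^ (i + 1))⁻¹ * (b ^ (n - i + 1))⁻¹ =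
      ((a ^ (n + 1))⁻¹ - (b ^ (n + 1))⁻¹) / (b - a) := by
  have hinv : a⁻¹ ≠ b⁻¹ := inv_injective.ne hab
  have hterm : ∀ i ∈ range (n + 1), (a ^ (i + 1))⁻¹ * (b ^ (n - i + 1))⁻¹ =
      (a⁻¹ * b⁻¹) * (a⁻¹ ^ i * b⁻¹ ^ (n + 1 - 1 - i)) := fun i _ => by
    rw [Nat.add_sub_cancel, ← inv_pow, ← inv_pow]; ring
  rw [sum_congr rfl hterm, ← mul_sum, geom₂_sum hinv, inv_pow, inv_pow]
  field_simp

lemma cexp_mul_neg_one_pow_div_factorial_mul_iteratedDeriv {s b : ℂ} (hb : s + b ≠ 0)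
    (θ x : ℂ) (n : ℕ) :
    cexp (-θ * x) * ((-1) ^ n / n ! * iteratedDeriv n (fun z => cexp (-z * x) / (s + z)) b) =
      ∑ i ∈ range (n + 1), ((s + b) ^ (n - i + 1))⁻¹ * (i ! : ℂ)⁻¹ *
        (x ^ i * cexp (-(θ + b) * x)) := by
  rw [neg_one_pow_div_factorial_mul_iteratedDeriv hb, mul_sum]
  refine sum_congr rfl fun i _ => ?_
  rw [neg_add, add_mul, Complex.exp_add]
  ring

lemma integrableOn_cexp_mul_iteratedDeriv {s θ b : ℂ} (hb : s + b ≠ 0) (hθb : 0 < (θ + b).re)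
    (n : ℕ) :
    IntegrableOn (fun x : ℝ => cexp (-θ * x) *
      ((-1) ^ n / n ! * iteratedDeriv n (fun z => cexp (-z * x) / (s + z)) b)) (Ioi 0) := by
  simp only [cexp_mul_neg_one_pow_div_factorial_mul_iteratedDeriv hb]
  exact integrable_finsetSum _ fun i _ =>
    (integrableOn_pow_mul_cexp_neg_mul_Ioi hθb i).const_mul _

lemma integral_cexp_mul_iteratedDeriv {s θ b : ℂ} (hb : s + b ≠ 0) (hθb : 0 < (θ + b).re)
    (hsθ : s ≠ θ) (n : ℕ) :
    ∫ x : ℝ in Ioi 0, cexp (-θ * x) *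
        ((-1) ^ n / n ! * iteratedDeriv n (fun z => cexp (-z * x) / (s + z)) b) =
      (((θ + b) ^ (n + 1))⁻¹ - ((s + b) ^ (n + 1))⁻¹) / (s - θ) := by
  have hθb0 : θ + b ≠ 0 := ne_zero_of_re_pos hθb
  simp only [cexp_mul_neg_one_pow_div_factorial_mul_iteratedDeriv hb]
  rw [integral_finsetSum _ fun i _ => (integrableOn_pow_mul_cexp_neg_mul_Ioi hθb i).const_mul _]
  simp only [integral_const_mul, integral_pow_mul_cexp_neg_mul_Ioi hθb]
  rw [← add_sub_add_right_eq_sub s θ b,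
    ← sum_inv_pow_mul_inv_pow hθb0 hb (by simpa using hsθ.symm) n]
  refine sum_congr rfl fun i _ => ?_
  have hi : (i ! : ℂ) ≠ 0 := by exact_mod_cast i.factorial_ne_zero
  field_simp

theorem paper_eq_2_33_general (K : ℕ) (β : Fin K → ℂ)
    (hβre : ∀ k, 0 < (β k).re)
    (M : Fin K → ℕ)
    (C0 : ℂ) (C : Fin K → ℕ → ℂ) (ψp : ℂ → ℂ)
    (hψp : ∀ s : ℂ, 0 ≤ s.re →
      ψp s = C0 + ∑ k, ∑ j ∈ Finset.Icc 1 (M k), C k j / (s + β k) ^ j)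
    (θ s : ℂ) (hθ : 0 < θ.re) (hs : 0 ≤ s.re) (hsθ : s ≠ θ) (hψs : ψp s ≠ 0) :
    MeasureTheory.IntegrableOn
      (fun x : ℝ => Complex.exp (-θ * x) * (1 / ψp s) *
        ∑ k, ∑ j ∈ Finset.Icc 1 (M k),
          C k j * ((-1) ^ (j - 1) / (Nat.factorial (j - 1) : ℂ)) *
            iteratedDeriv (j - 1) (fun b : ℂ => Complex.exp (-b * x) / (s + b)) (β k))
      (Set.Ioi 0) ∧
    ∫ x : ℝ in Set.Ioi 0, Complex.exp (-θ * x) * (1 / ψp s) *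
        ∑ k, ∑ j ∈ Finset.Icc 1 (M k),
          C k j * ((-1) ^ (j - 1) / (Nat.factorial (j - 1) : ℂ)) *
            iteratedDeriv (j - 1) (fun b : ℂ => Complex.exp (-b * x) / (s + b)) (β k)
      = (1 / (s - θ)) * (ψp θ / ψp s - 1) := by
  have hsβ k : s + β k ≠ 0 := ne_zero_of_re_pos (by rw [add_re]; linarith [hβre k])
  have hθβ k : 0 < (θ + β k).re := by rw [add_re]; linarith [hβre k]
  set T : Fin K → ℕ → ℝ → ℂ := fun k j x => cexp (-θ * x) * ((-1) ^ (j - 1) / (j - 1)! *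
    iteratedDeriv (j - 1) (fun b : ℂ => cexp (-b * x) / (s + b)) (β k))
  have hT k j : IntegrableOn (T k j) (Ioi 0) :=
    integrableOn_cexp_mul_iteratedDeriv (hsβ k) (hθβ k) _
  have hintegrand : (fun x : ℝ => cexp (-θ * x) * (1 / ψp s) *
      ∑ k, ∑ j ∈ Icc 1 (M k), C k j * ((-1) ^ (j - 1) / ((j - 1)! : ℂ)) *
        iteratedDeriv (j - 1) (fun b : ℂ => cexp (-b * x) / (s + b)) (β k)) =
      fun x => 1 / ψp s * ∑ k, ∑ j ∈ Icc 1 (M k), C k j * T k j x := by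
    ext x
    simp only [T, mul_sum]
    exact sum_congr rfl fun k _ => sum_congr rfl fun j _ => by ring
  have hsum : ∑ k, ∑ j ∈ Icc 1 (M k), C k j * ∫ x in Ioi 0, T k j x =
      (ψp θ - ψp s) / (s - θ) := by
    rw [hψp θ hθ.le, hψp s hs, add_sub_add_left_eq_sub, ← sum_sub_distrib, sum_div]
    refine sum_congr rfl fun k _ => ?_
    rw [← sum_sub_distrib, sum_div]
    refine sum_congr rfl fun j hj => ?_
    rw [integral_cexp_mul_iteratedDeriv (hsβ k) (hθβ k) hsθ,
      Nat.sub_add_cancel (mem_Icc.mp hj).1]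
    ring
  rw [hintegrand]
  refine ⟨(integrable_finsetSum _ fun k _ => integrable_finsetSum _ fun j _ =>
    (hT k j).const_mul _).const_mul _, ?_⟩
  rw [integral_const_mul, integral_finsetSum _ fun k _ => integrable_finsetSum _ fun j _ =>
    (hT k j).const_mul _]
  simp only [integral_finsetSum _ fun j _ => (hT _ j).const_mul _, integral_const_mul, hsum]
  field_simp

/-- Analytic core of formula (2.33) in Lemma 2.5: the Laplace transform in `x` of the
overshoot-density expansion equals `(ψ⁺(θ)/ψ⁺(s) − 1)/(s − θ)`, where
`ψ⁺(s) = C₀ + ∑_{k,j} C_{kj}/(s+β_k)^j`. -/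
theorem paper_eq_2_33 (K : ℕ) (β : Fin K → ℂ)
    (hβinj : Function.Injective β) (hβre : ∀ k, 0 < (β k).re)
    (M : Fin K → ℕ) (hM : ∀ k, 1 ≤ M k)
    (C0 : ℂ) (C : Fin K → ℕ → ℂ) (ψp : ℂ → ℂ)
    (hψp : ∀ s : ℂ, 0 ≤ s.re →
      ψp s = C0 + ∑ k, ∑ j ∈ Finset.Icc 1 (M k), C k j / (s + β k) ^ j)
    (θ s : ℂ) (hθ : 0 < θ.re) (hs : 0 ≤ s.re) (hsθ : s ≠ θ) (hψs : ψp s ≠ 0) :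
    MeasureTheory.IntegrableOn
      (fun x : ℝ => Complex.exp (-θ * x) * (1 / ψp s) *
        ∑ k, ∑ j ∈ Finset.Icc 1 (M k),
          C k j * ((-1) ^ (j - 1) / (Nat.factorial (j - 1) : ℂ)) *
            iteratedDeriv (j - 1) (fun b : ℂ => Complex.exp (-b * x) / (s + b)) (β k))
      (Set.Ioi 0) ∧
    ∫ x : ℝ in Set.Ioi 0, Complex.exp (-θ * x) * (1 / ψp s) *
        ∑ k, ∑ j ∈ Finset.Icc 1 (M k),
          C k j * ((-1) ^ (j - 1) / (Nat.factorial (j - 1) : ℂ)) *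
            iteratedDeriv (j - 1) (fun b : ℂ => Complex.exp (-b * x) / (s + b)) (β k)
      = (1 / (s - θ)) * (ψp θ / ψp s - 1) :=
  paper_eq_2_33_general K β hβre M C0 C ψp hψp θ s hθ hs hsθ hψs
end

section
/- Let θ, β, s ∈ ℂ with Re(θ + β) > 0 and s + β ≠ 0, and let j ∈ ℕ. Then the function x ↦ e^{−θx}·iteratedDeriv j (b ↦ e^{−bx}/(s+b)) (β) is integrable on (0,∞) and ∫_0^∞ e^{−θx}·iteratedDeriv j (b ↦ e^{−bx}/(s+b)) (β) dx = iteratedDeriv j (b ↦ 1/((θ+b)(s+b))) (β). -/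
/-!
Expanding both `b`-derivatives by the Leibniz rule reduces the identity, term by term, to the
Laplace transform `∫₀^∞ (-x)^k e^{-a x} dx = (-1)^k k! / a^(k+1) = (d/da)^k (1/a)` at
`a = θ + β`, which follows from `∫₀^∞ e^{-a x} dx = 1/a` by integrating by parts `k` times.
-/

open MeasureTheory Complex Finset Filter Set Topology
open scoped Nat

section LaplaceTransformPow

variable {a : ℂ}

lemma norm_ofReal_pow_mul_cexp_neg_mul (k : ℕ) {x : ℝ} (hx : 0 ≤ x) :
    ‖(x : ℂ) ^ k * cexp (-a * x)‖ = x ^ k * Real.exp (-a.re * x) := by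
  simp [norm_exp, abs_of_nonneg hx]

lemma tendsto_ofReal_pow_mul_cexp_neg_mul_atTop (ha : 0 < a.re) (k : ℕ) :
    Tendsto (fun x : ℝ => (x : ℂ) ^ k * cexp (-a * x)) atTop (𝓝 0) := by
  rw [tendsto_zero_iff_norm_tendsto_zero]
  refine (tendsto_rpow_mul_exp_neg_mul_atTop_nhds_zero k a.re ha).congr' ?_
  filter_upwards [eventually_ge_atTop 0] with x hx
  rw [norm_ofReal_pow_mul_cexp_neg_mul k hx, Real.rpow_natCast]

lemma integrableOn_ofReal_pow_mul_cexp_neg_mul_Ioi (ha : 0 < a.re) (k : ℕ) :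
    IntegrableOn (fun x : ℝ => (x : ℂ) ^ k * cexp (-a * x)) (Ioi 0) := by
  have hreal := integrableOn_rpow_mul_exp_neg_mul_rpow (p := 1) (s := k)
    (by linarith [k.cast_nonneg (α := ℝ)]) one_pos ha
  refine hreal.mono' (by fun_prop) ((ae_restrict_iff' measurableSet_Ioi).mpr
    (ae_of_all _ fun x hx => ?_))
  rw [norm_ofReal_pow_mul_cexp_neg_mul k (le_of_lt hx), Real.rpow_natCast, Real.rpow_one]

lemma integral_ofReal_pow_succ_mul_cexp_neg_mul_Ioi (ha : 0 < a.re) (k : ℕ) :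
    ∫ x : ℝ in Ioi 0, (x : ℂ) ^ (k + 1) * cexp (-a * x)
      = (k + 1) / a * ∫ x : ℝ in Ioi 0, (x : ℂ) ^ k * cexp (-a * x) := by
  have ha0 : a ≠ 0 := fun h => by simp [h] at ha
  have hderiv : ∀ x ∈ Ici (0 : ℝ),
      HasDerivAt (fun x : ℝ => -((x : ℂ) ^ (k + 1) * cexp (-a * x)) / a)
        ((x : ℂ) ^ (k + 1) * cexp (-a * x) - (k + 1) / a * ((x : ℂ) ^ k * cexp (-a * x)))
        x := by
    intro x _
    have hlin : HasDerivAt (fun z : ℂ => -a * z) (-a) (x : ℂ) := by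
      simpa using (hasDerivAt_id (x : ℂ)).const_mul (-a)
    have hprod := ((hasDerivAt_pow (k + 1) (x : ℂ)).mul hlin.cexp).neg.div_const a
    refine hprod.comp_ofReal.congr_deriv ?_
    field_simp
    push_cast
    ring
  have hint := integrableOn_ofReal_pow_mul_cexp_neg_mul_Ioi ha
  have hFTC := integral_Ioi_of_hasDerivAt_of_tendsto' hderiv
    ((hint (k + 1)).sub ((hint k).const_mul _))
    (by simpa using ((tendsto_ofReal_pow_mul_cexp_neg_mul_atTop ha (k + 1)).neg.div_const a))
  rw [integral_sub (hint (k + 1)) ((hint k).const_mul _), integral_const_mul] at hFTC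
  simpa [sub_eq_zero] using hFTC

lemma integral_ofReal_pow_mul_cexp_neg_mul_Ioi (ha : 0 < a.re) (k : ℕ) :
    ∫ x : ℝ in Ioi 0, (x : ℂ) ^ k * cexp (-a * x) = (k ! : ℂ) / a ^ (k + 1) := by
  induction k with
  | zero =>
    simpa [neg_div_neg_eq] using integral_exp_mul_complex_Ioi (a := -a) (by simpa using ha) 0
  | succ k ih =>
    rw [integral_ofReal_pow_succ_mul_cexp_neg_mul_Ioi ha, ih, Nat.factorial_succ]
    push_cast
    field_simp
    ring

lemma integral_neg_pow_mul_cexp_neg_mul_Ioi (ha : 0 < a.re) (k : ℕ) :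
    ∫ x : ℝ in Ioi 0, (-(x : ℂ)) ^ k * cexp (-a * x) = iteratedDeriv k Inv.inv a := by
  have hexp : (-1 - k : ℤ) = -((k + 1 : ℕ) : ℤ) := by push_cast; ring
  simp_rw [neg_pow (a := ((_ : ℝ) : ℂ)), mul_assoc]
  rw [integral_const_mul, integral_ofReal_pow_mul_cexp_neg_mul_Ioi ha, iteratedDeriv_eq_iterate,
    iter_deriv_inv, hexp, zpow_neg, zpow_natCast, div_eq_mul_inv, mul_assoc]

end LaplaceTransformPow

lemma iteratedDeriv_cexp_neg_mul (x b : ℂ) (k : ℕ) :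
    iteratedDeriv k (fun b : ℂ => cexp (-b * x)) b = (-x) ^ k * cexp (-b * x) := by
  simp_rw [neg_mul, mul_comm _ x, ← neg_mul, iteratedDeriv_cexp_const_mul]

theorem integral_cexp_mul_iteratedDeriv_cexp_neg_mul_mul {θ β : ℂ} (hθβ : 0 < (θ + β).re)
    {f : ℂ → ℂ} {j : ℕ} (hf : ContDiffAt ℂ j f β) :
    IntegrableOn (fun x : ℝ => cexp (-θ * x) *
        iteratedDeriv j (fun b : ℂ => cexp (-b * x) * f b) β) (Ioi 0) ∧
    ∫ x : ℝ in Ioi 0, cexp (-θ * x) * iteratedDeriv j (fun b : ℂ => cexp (-b * x) * f b) β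
      = iteratedDeriv j (fun b : ℂ => (θ + b)⁻¹ * f b) β := by
  have hθβ0 : θ + β ≠ 0 := fun h => by simp [h] at hθβ
  have hexpand : ∀ x : ℝ,
      cexp (-θ * x) * iteratedDeriv j (fun b : ℂ => cexp (-b * x) * f b) β
        = ∑ k ∈ range (j + 1), (j.choose k * iteratedDeriv (j - k) f β) *
            ((-(x : ℂ)) ^ k * cexp (-(θ + β) * x)) := by
    intro x
    rw [iteratedDeriv_fun_mul (by fun_prop) hf, mul_sum]
    refine sum_congr rfl fun k _ => ?_
    rw [iteratedDeriv_cexp_neg_mul, neg_add, add_mul, Complex.exp_add]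
    ring
  have hint : ∀ k,
      IntegrableOn (fun x : ℝ => (-(x : ℂ)) ^ k * cexp (-(θ + β) * x)) (Ioi 0) := by
    intro k
    simp_rw [neg_pow (a := ((_ : ℝ) : ℂ)), mul_assoc]
    exact (integrableOn_ofReal_pow_mul_cexp_neg_mul_Ioi hθβ k).const_mul _
  simp_rw [hexpand]
  refine ⟨integrable_finsetSum _ fun k _ => (hint k).const_mul _, ?_⟩
  have hinv : ContDiffAt ℂ j (fun b : ℂ => (θ + b)⁻¹) β :=
    (contDiffAt_const.add contDiffAt_id).inv hθβ0
  rw [integral_finsetSum _ fun k _ => (hint k).const_mul _, iteratedDeriv_fun_mul hinv hf]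
  refine sum_congr rfl fun k _ => ?_
  rw [integral_const_mul, integral_neg_pow_mul_cexp_neg_mul_Ioi hθβ,
    iteratedDeriv_comp_const_add k Inv.inv θ]
  ring

/-- Identity (2.35) of the paper: for `Re(θ + β) > 0` and `s + β ≠ 0`, the Laplace transform
over `(0, ∞)` of `x ↦ ∂_b^j (e^{-bx}/(s+b))|_{b = β}` against `e^{-θ x}` equals
`∂_b^j (1/((θ+b)(s+b)))|_{b = β}`. -/
theorem paper_eq_2_35 (θ β s : ℂ) (hθβ : 0 < (θ + β).re) (hsβ : s + β ≠ 0) (j : ℕ) :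
    MeasureTheory.IntegrableOn
      (fun x : ℝ => Complex.exp (-θ * x) *
        iteratedDeriv j (fun b : ℂ => Complex.exp (-b * x) / (s + b)) β) (Set.Ioi 0) ∧
    ∫ x : ℝ in Set.Ioi 0, Complex.exp (-θ * x) *
        iteratedDeriv j (fun b : ℂ => Complex.exp (-b * x) / (s + b)) β
      = iteratedDeriv j (fun b : ℂ => 1 / ((θ + b) * (s + b))) β := by
  simp_rw [div_eq_mul_inv, one_mul, mul_inv]
  exact integral_cexp_mul_iteratedDeriv_cexp_neg_mul_mul hθβ
    ((contDiffAt_const.add contDiffAt_id).inv hsβ)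
end

section
/- Let j ≥ 1 be a natural number, let x ≥ 0 be a real number, and let s, β ∈ ℂ with Re(s + β) > 0. Then the function y ↦ ((y+x)^{j−1}/(j−1)!)·e^{−sy−β(y+x)} is integrable on (0,∞) and ∫_0^∞ ((y+x)^{j−1}/(j−1)!)·e^{−sy−β(y+x)} dy = ((−1)^{j−1}/(j−1)!)·iteratedDeriv (j−1) (b ↦ e^{−bx}/(s+b)) (β). -/
/-! On the half-plane `Re (s + b) > 0` the function `b ↦ e^{-bx} / (s + b)` is the Laplace-type
integral `∫_0^∞ e^{-sy - b(y+x)} dy`. Differentiating under the integral sign, justified by the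
domination `|y + x|^k e^{-εy}` locally uniformly in `b`, multiplies the integrand by `-(y + x)`;
after `k` steps this gives `(-1)^k ∫_0^∞ (y + x)^k e^{-sy - b(y+x)} dy`. -/

open MeasureTheory Complex

open Set Filter Asymptotics

lemma integrableOn_Ioi_abs_add_pow_mul_exp_neg_mul (k : ℕ) (x : ℝ) {c : ℝ} (hc : 0 < c) :
    IntegrableOn (fun y : ℝ => |y + x| ^ k * Real.exp (-c * y)) (Ioi 0) := by
  refine integrable_of_isBigO_exp_neg (half_pos hc) (Continuous.continuousOn (by fun_prop)) ?_
  have hshift : (fun y : ℝ => Real.exp (c / 2 * (y + x))) =O[atTop]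
      fun y => Real.exp (c / 2 * y) :=
    ((isBigO_refl _ _).const_mul_left (Real.exp (c / 2 * x))).congr_left fun y => by
      rw [← Real.exp_add]; ring_nf
  have hpow : (fun y : ℝ => |y + x| ^ k) =O[atTop] fun y => Real.exp (c / 2 * y) := by
    refine (((isLittleO_pow_exp_pos_mul_atTop k (half_pos hc)).comp_tendsto
      (tendsto_atTop_add_const_right atTop x tendsto_id)).isBigO.norm_left.trans hshift).congr_left
      fun y => ?_
    simp
  refine (hpow.mul (isBigO_refl (fun y => Real.exp (-c * y)) atTop)).congr_right fun y => ?_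
  rw [← Real.exp_add]; ring_nf

noncomputable def shiftedGammaKernel (s : ℂ) (x : ℝ) (k : ℕ) (b : ℂ) (y : ℝ) : ℂ :=
  ((y + x : ℝ) : ℂ) ^ k * exp (-s * y - b * ((y : ℂ) + (x : ℂ)))

section shiftedGammaKernel

variable (s : ℂ) (x : ℝ) (k : ℕ)

lemma continuous_shiftedGammaKernel (b : ℂ) : Continuous (shiftedGammaKernel s x k b) := by
  unfold shiftedGammaKernel
  fun_prop

lemma norm_shiftedGammaKernel (b : ℂ) (y : ℝ) :
    ‖shiftedGammaKernel s x k b y‖ = |y + x| ^ k * Real.exp (-(s + b).re * y - b.re * x) := by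
  rw [shiftedGammaKernel, norm_mul, norm_pow, norm_real, Real.norm_eq_abs, norm_exp]
  congr 2
  simp only [sub_re, neg_re, mul_re, add_re, add_im, ofReal_re, ofReal_im]
  ring

lemma norm_shiftedGammaKernel_le {b w : ℂ} {ε y : ℝ} (hw : ‖w - b‖ ≤ ε) (hy : 0 ≤ y) :
    ‖shiftedGammaKernel s x k w y‖ ≤
      Real.exp ((|b.re| + ε) * |x|) * (|y + x| ^ k * Real.exp (-((s + b).re - ε) * y)) := by
  have hre : |w.re - b.re| ≤ ε := by simpa using (abs_re_le_norm (w - b)).trans hw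
  have hexp : -(s + w).re * y - w.re * x ≤ (|b.re| + ε) * |x| + -((s + b).re - ε) * y := by
    have h1 : -(s + w).re * y ≤ -((s + b).re - ε) * y := by
      simp only [add_re]
      nlinarith [abs_le.mp hre]
    have h2 : -w.re * x ≤ (|b.re| + ε) * |x| := calc
      -w.re * x ≤ |w.re| * |x| := by rw [neg_mul, ← abs_mul]; exact neg_le_abs _
      _ ≤ (|b.re| + ε) * |x| := by
        gcongr; linarith [abs_sub_abs_le_abs_sub w.re b.re]
    linarith
  rw [norm_shiftedGammaKernel, mul_left_comm, ← Real.exp_add]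
  gcongr

lemma integrableOn_shiftedGammaKernel {b : ℂ} (hb : 0 < (s + b).re) :
    IntegrableOn (shiftedGammaKernel s x k b) (Ioi 0) := by
  refine Integrable.mono'
    ((integrableOn_Ioi_abs_add_pow_mul_exp_neg_mul k x hb).const_mul (Real.exp (|b.re| * |x|)))
    (continuous_shiftedGammaKernel s x k b).aestronglyMeasurable.restrict ?_
  refine (ae_restrict_iff' measurableSet_Ioi).mpr (Eventually.of_forall fun y hy => ?_)
  simpa using norm_shiftedGammaKernel_le s x k (le_refl ‖b - b‖) (le_of_lt hy)

lemma hasDerivAt_shiftedGammaKernel (w : ℂ) (y : ℝ) :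
    HasDerivAt (fun b => shiftedGammaKernel s x k b y) (-shiftedGammaKernel s x (k + 1) w y) w := by
  have hexp : HasDerivAt (fun b : ℂ => -s * y - b * ((y : ℂ) + (x : ℂ)))
      (-((y : ℂ) + (x : ℂ))) w := by
    simpa using ((hasDerivAt_id w).mul_const ((y : ℂ) + (x : ℂ))).const_sub (-s * y)
  refine (hexp.cexp.const_mul (((y + x : ℝ) : ℂ) ^ k)).congr_deriv ?_
  simp only [shiftedGammaKernel, pow_succ]
  push_cast
  ring

lemma integral_shiftedGammaKernel_zero {b : ℂ} (hb : 0 < (s + b).re) :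
    ∫ y in Ioi 0, shiftedGammaKernel s x 0 b y = exp (-b * x) / (s + b) := by
  have hsplit : ∀ y : ℝ, shiftedGammaKernel s x 0 b y = exp (-b * x) * exp (-(s + b) * y) := by
    intro y
    rw [shiftedGammaKernel, pow_zero, one_mul, ← exp_add]
    ring_nf
  simp_rw [hsplit]
  have hre : (-(s + b)).re < 0 := by rw [neg_re]; linarith
  rw [integral_const_mul, integral_exp_mul_complex_Ioi hre, ofReal_zero, mul_zero, exp_zero,
    neg_div, div_neg, neg_neg, mul_one_div]

lemma hasDerivAt_integral_shiftedGammaKernel {b : ℂ} (hb : 0 < (s + b).re) :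
    HasDerivAt (fun w => ∫ y in Ioi 0, shiftedGammaKernel s x k w y)
      (-∫ y in Ioi 0, shiftedGammaKernel s x (k + 1) b y) b := by
  set ε := (s + b).re / 2
  have hε : 0 < ε := half_pos hb
  have hdom : ∀ᵐ y ∂volume.restrict (Ioi 0), ∀ w ∈ Metric.ball b ε,
      ‖-shiftedGammaKernel s x (k + 1) w y‖ ≤
        Real.exp ((|b.re| + ε) * |x|) * (|y + x| ^ (k + 1) * Real.exp (-ε * y)) := by
    refine (ae_restrict_iff' measurableSet_Ioi).mpr (Eventually.of_forall fun y hy w hw => ?_)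
    rw [norm_neg, show -ε = -((s + b).re - ε) by ring]
    exact norm_shiftedGammaKernel_le s x (k + 1) (mem_ball_iff_norm.mp hw).le (le_of_lt hy)
  have hmeas : ∀ n w,
      AEStronglyMeasurable (shiftedGammaKernel s x n w) (volume.restrict (Ioi 0)) :=
    fun n w => (continuous_shiftedGammaKernel s x n w).aestronglyMeasurable.restrict
  rw [← integral_neg]
  exact (hasDerivAt_integral_of_dominated_loc_of_deriv_le (Metric.ball_mem_nhds b hε)
    (Eventually.of_forall (hmeas k)) (integrableOn_shiftedGammaKernel s x k hb)
    (hmeas (k + 1) b).neg hdom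
    ((integrableOn_Ioi_abs_add_pow_mul_exp_neg_mul (k + 1) x hε).const_mul _)
    (Eventually.of_forall fun y w _ => hasDerivAt_shiftedGammaKernel s x k w y)).2

end shiftedGammaKernel

lemma iteratedDeriv_exp_neg_mul_div_add_eqOn (s : ℂ) (x : ℝ) (k : ℕ) :
    EqOn (iteratedDeriv k fun b : ℂ => exp (-b * x) / (s + b))
      (fun b => (-1) ^ k * ∫ y in Ioi 0, shiftedGammaKernel s x k b y)
      {b | 0 < (s + b).re} := by
  have hopen : IsOpen {b : ℂ | 0 < (s + b).re} :=
    isOpen_lt continuous_const (continuous_re.comp (continuous_const_add s))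
  induction k with
  | zero =>
    intro b hb
    simp [integral_shiftedGammaKernel_zero s x hb]
  | succ k ih =>
    intro b hb
    rw [iteratedDeriv_succ, (ih.eventuallyEq_of_mem (hopen.mem_nhds hb)).deriv_eq,
      ((hasDerivAt_integral_shiftedGammaKernel s x k hb).const_mul _).deriv, pow_succ]
    ring

theorem paper_eq_2_26_integral_general (j : ℕ) (x : ℝ) (s β : ℂ)
    (hsβ : 0 < (s + β).re) :
    MeasureTheory.IntegrableOn
      (fun y : ℝ => (((y + x : ℝ) : ℂ) ^ (j - 1) / (Nat.factorial (j - 1) : ℂ)) *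
        Complex.exp (-s * y - β * ((y : ℂ) + (x : ℂ)))) (Set.Ioi 0) ∧
    ∫ y : ℝ in Set.Ioi 0,
        (((y + x : ℝ) : ℂ) ^ (j - 1) / (Nat.factorial (j - 1) : ℂ)) *
          Complex.exp (-s * y - β * ((y : ℂ) + (x : ℂ)))
      = ((-1) ^ (j - 1) / (Nat.factorial (j - 1) : ℂ)) *
          iteratedDeriv (j - 1) (fun b : ℂ => Complex.exp (-b * x) / (s + b)) β := by
  set k := j - 1
  have hintegrand : (fun y : ℝ => (((y + x : ℝ) : ℂ) ^ k / (Nat.factorial k : ℂ)) *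
      exp (-s * y - β * ((y : ℂ) + (x : ℂ)))) =
      fun y => (Nat.factorial k : ℂ)⁻¹ * shiftedGammaKernel s x k β y := by
    ext y
    rw [shiftedGammaKernel, div_eq_inv_mul, mul_assoc]
  rw [hintegrand, integral_const_mul, iteratedDeriv_exp_neg_mul_div_add_eqOn s x k hsβ,
    ← mul_assoc, div_mul_eq_mul_div, ← pow_add, ← two_mul, pow_mul, neg_one_sq, one_pow]
  exact ⟨(integrableOn_shiftedGammaKernel s x k hsβ).const_mul _, by ring⟩

/-- The integral identity in formula (2.26) of Lemma 2.4: for `j ≥ 1`, `x ≥ 0` and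
`Re(s + β) > 0`,
`∫_0^∞ ((y+x)^{j-1}/(j-1)!) e^{-sy - β(y+x)} dy
  = ((-1)^{j-1}/(j-1)!) ∂_b^{j-1} (e^{-bx}/(s+b))|_{b = β}`. -/
theorem paper_eq_2_26_integral (j : ℕ) (hj : 1 ≤ j) (x : ℝ) (hx : 0 ≤ x) (s β : ℂ)
    (hsβ : 0 < (s + β).re) :
    MeasureTheory.IntegrableOn
      (fun y : ℝ => (((y + x : ℝ) : ℂ) ^ (j - 1) / (Nat.factorial (j - 1) : ℂ)) *
        Complex.exp (-s * y - β * ((y : ℂ) + (x : ℂ)))) (Set.Ioi 0) ∧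
    ∫ y : ℝ in Set.Ioi 0,
        (((y + x : ℝ) : ℂ) ^ (j - 1) / (Nat.factorial (j - 1) : ℂ)) *
          Complex.exp (-s * y - β * ((y : ℂ) + (x : ℂ)))
      = ((-1) ^ (j - 1) / (Nat.factorial (j - 1) : ℂ)) *
          iteratedDeriv (j - 1) (fun b : ℂ => Complex.exp (-b * x) / (s + b)) β :=
  paper_eq_2_26_integral_general j x s β hsβ
end

section
/- Let j ≥ 1 be a natural number, let x ≤ 0 be a real number, and let s, γ ∈ ℂ with Re(s + γ) > 0. Then the function y ↦ ((−y−x)^{j−1}/(j−1)!)·e^{sy+γ(y+x)} is integrable on (−∞,0) and ∫_{−∞}^0 ((−y−x)^{j−1}/(j−1)!)·e^{sy+γ(y+x)} dy = ((−1)^{j−1}/(j−1)!)·iteratedDeriv (j−1) (g ↦ e^{gx}/(s+g)) (γ). -/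
/-!
For `Re(s + γ) > 0` one has `e^{γx}/(s + γ) = ∫_{-∞}^0 e^{sy + γ(y+x)} dy`, and each
`γ`-derivative may be taken under the integral sign, where it brings down a factor `y + x`.
Hence `∂_γ^k (e^{γx}/(s + γ)) = ∫_{-∞}^0 (y+x)^k e^{sy + γ(y+x)} dy`, and
`(-y-x)^k = (-1)^k (y+x)^k` gives the identity. Integrability and the domination near `γ` come
from `|y + x|^k ≤ k! a^{-k} e^{a(|x| - y)}` for `y ≤ 0`, which reduces every bound to an
exponential `C e^{by}` with `b > 0`.
-/

open MeasureTheory Complex Set Filter Topology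
open scoped Nat

lemma pow_le_factorial_div_mul_exp (n : ℕ) {a t : ℝ} (ha : 0 < a) (ht : 0 ≤ t) :
    t ^ n ≤ n ! / a ^ n * Real.exp (a * t) := by
  have h := Real.pow_div_factorial_le_exp _ (mul_nonneg ha.le ht) n
  rw [div_le_iff₀ (by positivity), mul_pow] at h
  rw [div_mul_eq_mul_div, le_div_iff₀ (by positivity)]
  linarith

lemma norm_pow_mul_cexp_le {k : ℕ} {x y b R : ℝ} {s g : ℂ} (hy : y ≤ 0) (hb : 0 < b)
    (hsg : b ≤ (s + g).re) (hg : |g.re| ≤ R) :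
    ‖((y : ℂ) + x) ^ k * cexp (s * y + g * (y + x))‖ ≤
      k ! / (b / 2) ^ k * Real.exp ((b / 2 + R) * |x|) * Real.exp (b / 2 * y) := by
  have hnorm : ‖((y : ℂ) + x) ^ k * cexp (s * y + g * (y + x))‖ =
      |y + x| ^ k * Real.exp ((s + g).re * y + g.re * x) := by
    rw [norm_mul, norm_pow, Complex.norm_exp, ← ofReal_add, norm_real, Real.norm_eq_abs]
    congr 2
    simp only [add_re, mul_re, ofReal_re, ofReal_im]
    ring
  have hpow : |y + x| ^ k ≤ k ! / (b / 2) ^ k * Real.exp (b / 2 * (|x| - y)) :=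
    calc |y + x| ^ k ≤ (|x| - y) ^ k := by
          gcongr
          linarith [abs_add_le y x, abs_of_nonpos hy]
      _ ≤ _ := pow_le_factorial_div_mul_exp k (half_pos hb) (by linarith [abs_nonneg x])
  have hexp : (s + g).re * y + g.re * x ≤ b * y + R * |x| := by
    have hy' : (s + g).re * y ≤ b * y := mul_le_mul_of_nonpos_right hsg hy
    have hx' : g.re * x ≤ R * |x| := by
      calc g.re * x ≤ |g.re| * |x| := by rw [← abs_mul]; exact le_abs_self _
        _ ≤ R * |x| := by gcongr
    linarith
  calc _ = |y + x| ^ k * Real.exp ((s + g).re * y + g.re * x) := hnorm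
    _ ≤ k ! / (b / 2) ^ k * Real.exp (b / 2 * (|x| - y)) * Real.exp (b * y + R * |x|) := by
      gcongr
    _ = _ := by
      rw [mul_assoc, mul_assoc, ← Real.exp_add, ← Real.exp_add]
      ring_nf

lemma integrableOn_const_mul_exp_mul_Iio_zero (C : ℝ) {a : ℝ} (ha : 0 < a) :
    IntegrableOn (fun y : ℝ => C * Real.exp (a * y)) (Iio 0) :=
  ((integrableOn_exp_mul_Iic ha 0).mono_set Iio_subset_Iic_self).const_mul C

section

variable (x : ℝ) (s : ℂ)

lemma integrableOn_pow_mul_cexp (k : ℕ) {g : ℂ} (hg : 0 < (s + g).re) :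
    IntegrableOn (fun y : ℝ => ((y : ℂ) + x) ^ k * cexp (s * y + g * (y + x))) (Iio 0) := by
  apply Integrable.mono' (integrableOn_const_mul_exp_mul_Iio_zero _ (half_pos hg))
  · fun_prop
  · filter_upwards [ae_restrict_mem measurableSet_Iio] with y hy
    exact norm_pow_mul_cexp_le hy.le hg le_rfl le_rfl

lemma hasDerivAt_integral_pow_mul_cexp (k : ℕ) {γ : ℂ} (hγ : 0 < (s + γ).re) :
    HasDerivAt (fun g : ℂ => ∫ y : ℝ in Iio 0, ((y : ℂ) + x) ^ k * cexp (s * y + g * (y + x)))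
      (∫ y : ℝ in Iio 0, ((y : ℂ) + x) ^ (k + 1) * cexp (s * y + γ * (y + x))) γ := by
  obtain ⟨ε, hε_def⟩ : ∃ ε, ε = (s + γ).re / 2 := ⟨_, rfl⟩
  have hε : 0 < ε := hε_def ▸ half_pos hγ
  have hball : ∀ g ∈ Metric.ball γ ε, ε ≤ (s + g).re ∧ |g.re| ≤ |γ.re| + ε := by
    intro g hg
    have hre : |g.re - γ.re| < ε :=
      (abs_re_le_norm (g - γ)).trans_lt (by rwa [← Complex.dist_eq, ← Metric.mem_ball])
    constructor
    · simp only [hε_def, add_re] at hγ hre ⊢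
      linarith [(abs_lt.mp hre).1]
    · linarith [abs_sub_abs_le_abs_sub g.re γ.re]
  refine (hasDerivAt_integral_of_dominated_loc_of_deriv_le
    (F := fun g (y : ℝ) => ((y : ℂ) + x) ^ k * cexp (s * y + g * (y + x)))
    (F' := fun g (y : ℝ) => ((y : ℂ) + x) ^ (k + 1) * cexp (s * y + g * (y + x)))
    (Metric.ball_mem_nhds γ hε)
    (Eventually.of_forall fun g => by fun_prop) (integrableOn_pow_mul_cexp x s k hγ)
    (by fun_prop) ?_ (integrableOn_const_mul_exp_mul_Iio_zero ?C (half_pos hε)) ?_).2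
  · filter_upwards [ae_restrict_mem measurableSet_Iio] with y hy g hg
    exact norm_pow_mul_cexp_le hy.le hε (hball g hg).1 (hball g hg).2
  · exact Eventually.of_forall fun y g _ =>
      (((hasDerivAt_mul_const ((y : ℂ) + x)).const_add (s * y)).cexp.const_mul
        (((y : ℂ) + x) ^ k)).congr_deriv (by ring)

lemma iteratedDeriv_cexp_mul_div_eq_integral (k : ℕ) {γ : ℂ} (hγ : 0 < (s + γ).re) :
    iteratedDeriv k (fun g : ℂ => cexp (g * x) / (s + g)) γ =
      ∫ y : ℝ in Iio 0, ((y : ℂ) + x) ^ k * cexp (s * y + γ * (y + x)) := by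
  induction k generalizing γ with
  | zero =>
    simp_rw [iteratedDeriv_zero, pow_zero, one_mul, ← integral_Iic_eq_integral_Iio]
    calc cexp (γ * x) / (s + γ)
        = (∫ y : ℝ in Iic 0, cexp ((s + γ) * y)) * cexp (γ * x) := by
          rw [integral_exp_mul_complex_Iic hγ, ofReal_zero, mul_zero, Complex.exp_zero]
          ring
      _ = _ := by
          rw [← integral_mul_const]
          congr 1 with y
          rw [← Complex.exp_add]
          ring_nf
  | succ k ih =>
    have hopen : IsOpen {g : ℂ | 0 < (s + g).re} := isOpen_lt continuous_const (by fun_prop)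
    have heq : iteratedDeriv k (fun g : ℂ => cexp (g * x) / (s + g)) =ᶠ[𝓝 γ]
        fun g => ∫ y : ℝ in Iio 0, ((y : ℂ) + x) ^ k * cexp (s * y + g * (y + x)) :=
      Eventually.mono (hopen.mem_nhds hγ) fun g hg => ih hg
    rw [iteratedDeriv_succ, heq.deriv_eq, (hasDerivAt_integral_pow_mul_cexp x s k hγ).deriv]

end

theorem paper_eq_2_24_integral_general (j : ℕ) (x : ℝ) (s γ : ℂ)
    (hsγ : 0 < (s + γ).re) :
    MeasureTheory.IntegrableOn
      (fun y : ℝ => (((-y - x : ℝ) : ℂ) ^ (j - 1) / (Nat.factorial (j - 1) : ℂ)) *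
        Complex.exp (s * y + γ * ((y : ℂ) + (x : ℂ)))) (Set.Iio 0) ∧
    ∫ y : ℝ in Set.Iio 0,
        (((-y - x : ℝ) : ℂ) ^ (j - 1) / (Nat.factorial (j - 1) : ℂ)) *
          Complex.exp (s * y + γ * ((y : ℂ) + (x : ℂ)))
      = ((-1) ^ (j - 1) / (Nat.factorial (j - 1) : ℂ)) *
          iteratedDeriv (j - 1) (fun g : ℂ => Complex.exp (g * x) / (s + g)) γ := by
  set k := j - 1
  have hintegrand : (fun y : ℝ => (((-y - x : ℝ) : ℂ) ^ k / k !) * cexp (s * y + γ * (y + x))) =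
      fun y : ℝ => (-1) ^ k / k ! * (((y : ℂ) + x) ^ k * cexp (s * y + γ * (y + x))) := by
    ext y
    rw [ofReal_sub, ofReal_neg, ← neg_add', neg_pow]
    ring
  rw [hintegrand, integral_const_mul, iteratedDeriv_cexp_mul_div_eq_integral x s k hsγ]
  exact ⟨(integrableOn_pow_mul_cexp x s k hsγ).const_mul _, rfl⟩

/-- The integral identity in formula (2.24) of Lemma 2.4 (negative half-line version):
for `j ≥ 1`, `x ≤ 0` and `Re(s + γ) > 0`,
`∫_{-∞}^0 ((-y-x)^{j-1}/(j-1)!) e^{sy + γ(y+x)} dy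
  = ((-1)^{j-1}/(j-1)!) ∂_g^{j-1} (e^{gx}/(s+g))|_{g = γ}`. -/
theorem paper_eq_2_24_integral (j : ℕ) (hj : 1 ≤ j) (x : ℝ) (hx : x ≤ 0) (s γ : ℂ)
    (hsγ : 0 < (s + γ).re) :
    MeasureTheory.IntegrableOn
      (fun y : ℝ => (((-y - x : ℝ) : ℂ) ^ (j - 1) / (Nat.factorial (j - 1) : ℂ)) *
        Complex.exp (s * y + γ * ((y : ℂ) + (x : ℂ)))) (Set.Iio 0) ∧
    ∫ y : ℝ in Set.Iio 0,
        (((-y - x : ℝ) : ℂ) ^ (j - 1) / (Nat.factorial (j - 1) : ℂ)) *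
          Complex.exp (s * y + γ * ((y : ℂ) + (x : ℂ)))
      = ((-1) ^ (j - 1) / (Nat.factorial (j - 1) : ℂ)) *
          iteratedDeriv (j - 1) (fun g : ℂ => Complex.exp (g * x) / (s + g)) γ :=
  paper_eq_2_24_integral_general j x s γ hsγ
end
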